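/- Let ε > 0, let r ≥ 1, and let σ_1, …, σ_r : ℝ → [0,∞) be Schwartz functions with ‖σ_i‖₁ + ‖σ_i'‖₁ ≤ 3/4 and ‖σ_i'‖_∞ ≤ ε for each i. Then sup_{m∈ℤ} |(σ_1∗⋯∗σ_r)(m) − ([σ_1]∗⋯∗[σ_r])(m)| < 3ε, where the first convolution is over ℝ and the second is over ℤ. -/

import Mathlib

open MeasureTheory

/-- Convolution of functions on `ℝ`. -/
noncomputable def rconv (f g : ℝ → ℝ) : ℝ → ℝ := fun x => ∫ y : ℝ, f y * g (x - y)

/-- Iterated convolution on `ℝ`. -/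
noncomputable def iConvR : (m : ℕ) → (Fin (m + 1) → ℝ → ℝ) → ℝ → ℝ
  | 0, f => f 0
  | m + 1, f => rconv (f 0) (iConvR m (fun i => f i.succ))

/-- Discrete convolution of functions on `ℤ`. -/
noncomputable def zconv (A B : ℤ → ℝ) : ℤ → ℝ := fun n => ∑' p : ℤ, A p * B (n - p)

/-- Iterated discrete convolution. -/
noncomputable def iConv : (m : ℕ) → (Fin (m + 1) → ℤ → ℝ) → ℤ → ℝ
  | 0, A => A 0
  | m + 1, A => zconv (A 0) (iConv m (fun i => A i.succ))

/-!
Sampling a differentiable integrable `h` at the integers costs at most `∫ |h'|`: on each cell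
`[n, n + 1]` the value `h n` differs from the mean of `h` over the cell by at most the variation
of `h` there. Applied to `y ↦ σ₀ y * G (k - y)`, with `G` the real convolution of the other
factors, this compares `(σ₀ ∗ G) k` with `∑ₚ σ₀ p * G (k - p)` up to `ε ∫ G + ‖σ₀‖₁ ‖G'‖_∞`.
Replacing `G` by the integer convolution `A` of the other factors costs `(∑ₚ σ₀ p) * sup |G - A|`,
and the same sampling bound gives `∑ₚ σ₀ p ≤ ‖σ₀‖₁ + ‖σ₀'‖₁ ≤ c`. A real convolution of `m + 1`
factors has integral at most `c ^ (m + 1)` and derivative at most `ε c ^ m`, so by induction on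
the number of factors the error for `m + 1` factors is at most `2 m ε c ^ m`; for `c = 3/4` this
is at most `81/32 ε < 3 ε`.
-/

open Set
open scoped Convolution SchwartzMap

section Sampling

variable {h h' : ℝ → ℝ}

theorem abs_sub_le_intervalIntegral_abs_deriv (hd : ∀ x, HasDerivAt h (h' x) x)
    (hi' : Integrable h') {a b x y : ℝ} (hab : a ≤ b) (hx : x ∈ Icc a b) (hy : y ∈ Icc a b) :
    |h x - h y| ≤ ∫ t in a..b, |h' t| := by
  rw [← intervalIntegral.integral_eq_sub_of_hasDerivAt (fun t _ => hd t) hi'.intervalIntegrable]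
  calc |∫ t in y..x, h' t| ≤ |(∫ t in y..x, |h' t|)| := by
        simpa only [Real.norm_eq_abs] using
          intervalIntegral.norm_integral_le_abs_integral_norm (μ := volume) (f := h') (a := y)
            (b := x)
    _ ≤ |(∫ t in a..b, |h' t|)| :=
        intervalIntegral.abs_integral_mono_interval
          (uIoc_subset_uIoc_of_uIcc_subset_uIcc
            (uIcc_subset_uIcc (Icc_subset_uIcc hy) (Icc_subset_uIcc hx)))
          (ae_of_all _ fun t => abs_nonneg _) hi'.abs.intervalIntegrable
    _ = ∫ t in a..b, |h' t| :=
        abs_of_nonneg (intervalIntegral.integral_nonneg hab fun t _ => abs_nonneg _)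

theorem abs_intervalIntegral_sub_le (hd : ∀ x, HasDerivAt h (h' x) x) (hi' : Integrable h')
    {a x : ℝ} (hx : x ∈ Icc a (a + 1)) :
    |(∫ t in a..a + 1, h t) - h x| ≤ ∫ t in a..a + 1, |h' t| := by
  have hc : Continuous h := continuous_iff_continuousAt.2 fun x => (hd x).continuousAt
  have hmean : (∫ t in a..a + 1, h t) - h x = ∫ t in a..a + 1, (h t - h x) := by
    simp [intervalIntegral.integral_sub (hc.intervalIntegrable _ _) intervalIntegrable_const]
  rw [hmean]
  have hcell : ∀ t ∈ uIoc a (a + 1), ‖h t - h x‖ ≤ ∫ s in a..a + 1, |h' s| := fun t ht =>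
    abs_sub_le_intervalIntegral_abs_deriv hd hi' (by linarith)
      (Ioc_subset_Icc_self (by rwa [uIoc_of_le (by linarith)] at ht)) hx
  simpa using intervalIntegral.norm_integral_le_of_norm_le_const hcell

theorem hasSum_intervalIntegral_intCast {f : ℝ → ℝ} (hf : Integrable f) :
    HasSum (fun n : ℤ => ∫ t in (n : ℝ)..n + 1, f t) (∫ t, f t) := by
  simpa using hf.hasSum_intervalIntegral 0

theorem summable_sub_intervalIntegral_intCast (hd : ∀ x, HasDerivAt h (h' x) x)
    (hi' : Integrable h') : Summable fun n : ℤ => h n - ∫ t in (n : ℝ)..n + 1, h t :=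
  (hasSum_intervalIntegral_intCast hi'.abs).summable.of_norm_bounded fun n => by
    rw [Real.norm_eq_abs, abs_sub_comm]
    exact abs_intervalIntegral_sub_le hd hi' (left_mem_Icc.2 (by linarith))

theorem summable_comp_intCast (hd : ∀ x, HasDerivAt h (h' x) x) (hi : Integrable h)
    (hi' : Integrable h') : Summable fun n : ℤ => h n := by
  simpa using (summable_sub_intervalIntegral_intCast hd hi').add
    (hasSum_intervalIntegral_intCast hi).summable

theorem abs_tsum_comp_intCast_sub_integral_le (hd : ∀ x, HasDerivAt h (h' x) x)
    (hi : Integrable h) (hi' : Integrable h') :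
    |∑' n : ℤ, h n - ∫ t, h t| ≤ ∫ t, |h' t| := by
  have hcells := hasSum_intervalIntegral_intCast hi
  have hdiff := summable_sub_intervalIntegral_intCast hd hi'
  rw [← hcells.tsum_eq, ← (summable_comp_intCast hd hi hi').tsum_sub hcells.summable,
    ← (hasSum_intervalIntegral_intCast hi'.abs).tsum_eq]
  calc |∑' n : ℤ, (h n - ∫ t in (n : ℝ)..n + 1, h t)|
      ≤ ∑' n : ℤ, |h n - ∫ t in (n : ℝ)..n + 1, h t| := by
        simpa only [Real.norm_eq_abs] using norm_tsum_le_tsum_norm hdiff.norm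
    _ ≤ ∑' n : ℤ, ∫ t in (n : ℝ)..n + 1, |h' t| := by
        refine hdiff.abs.tsum_le_tsum (fun n => ?_)
          (hasSum_intervalIntegral_intCast hi'.abs).summable
        rw [abs_sub_comm]
        exact abs_intervalIntegral_sub_le hd hi' (left_mem_Icc.2 (by linarith))

theorem tsum_comp_intCast_le (hd : ∀ x, HasDerivAt h (h' x) x) (hi : Integrable h)
    (hi' : Integrable h') : ∑' n : ℤ, h n ≤ (∫ t, |h t|) + ∫ t, |h' t| := by
  have hsampling := (abs_le.1 (abs_tsum_comp_intCast_sub_integral_le hd hi hi')).2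
  have habs := integral_mono hi hi.abs fun t => le_abs_self (h t)
  linarith

end Sampling

section Convolution

variable {f g : ℝ → ℝ}

theorem integrable_mul_comp_sub {M : ℝ} (hf : Integrable f) (hg : Measurable g)
    (hM : ∀ x, |g x| ≤ M) (x : ℝ) : Integrable fun y => f y * g (x - y) :=
  hf.mul_bdd (hg.comp (measurable_const.sub measurable_id)).aestronglyMeasurable
    (ae_of_all _ fun _ => hM _)

theorem abs_rconv_le {M : ℝ} (hf : Integrable f) (hM : ∀ x, |g x| ≤ M) (x : ℝ) :
    |rconv f g x| ≤ (∫ y, |f y|) * M := by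
  rw [← integral_mul_const M fun y => |f y|]
  refine norm_integral_le_of_norm_le (f := fun y => f y * g (x - y)) (hf.abs.mul_const M)
    (ae_of_all _ fun y => ?_)
  rw [Real.norm_eq_abs, abs_mul]
  exact mul_le_mul_of_nonneg_left (hM _) (abs_nonneg _)

theorem hasDerivAt_rconv {M D : ℝ} (hf : Integrable f) (hg : Differentiable ℝ g)
    (hM : ∀ x, |g x| ≤ M) (hD : ∀ x, |deriv g x| ≤ D) (x : ℝ) :
    HasDerivAt (rconv f g) (rconv f (deriv g) x) x :=
  (hasDerivAt_integral_of_dominated_loc_of_deriv_le (𝕜 := ℝ) (μ := volume) (x₀ := x)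
    (F := fun x y => f y * g (x - y))
    (F' := fun x y => f y * deriv g (x - y)) (bound := fun y => |f y| * D)
    Filter.univ_mem
    (Filter.Eventually.of_forall fun z =>
      (integrable_mul_comp_sub hf hg.continuous.measurable hM z).aestronglyMeasurable)
    (integrable_mul_comp_sub hf hg.continuous.measurable hM x)
    (integrable_mul_comp_sub hf (measurable_deriv g) hD x).aestronglyMeasurable
    (ae_of_all _ fun y z _ => by
      rw [Real.norm_eq_abs, abs_mul]
      exact mul_le_mul_of_nonneg_left (hD _) (abs_nonneg _))
    (hf.abs.mul_const D)
    (ae_of_all _ fun y z _ =>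
      ((hg (z - y)).hasDerivAt.comp_sub_const z y).const_mul (f y))).2

theorem rconv_eq_convolution : rconv f g = f ⋆[ContinuousLinearMap.mul ℝ ℝ] g := rfl

structure IsControlledDensity (g : ℝ → ℝ) (I D : ℝ) : Prop where
  nonneg : ∀ x, 0 ≤ g x
  bounded : ∃ M, ∀ x, |g x| ≤ M
  integrable : Integrable g
  integral_le : ∫ x, g x ≤ I
  differentiable : Differentiable ℝ g
  abs_deriv_le : ∀ x, |deriv g x| ≤ D

theorem IsControlledDensity.rconv {I D c : ℝ} (hf₀ : ∀ x, 0 ≤ f x) (hfi : Integrable f)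
    (hfc : ∫ x, f x ≤ c) (hg : IsControlledDensity g I D) :
    IsControlledDensity (rconv f g) (c * I) (c * D) := by
  obtain ⟨M, hM⟩ := hg.bounded
  have hfabs : ∫ x, |f x| = ∫ x, f x := by simp_rw [abs_of_nonneg (hf₀ _)]
  have hc : 0 ≤ c := (integral_nonneg hf₀).trans hfc
  have hderiv := hasDerivAt_rconv hfi hg.differentiable hM hg.abs_deriv_le
  refine ⟨fun x => integral_nonneg fun y => mul_nonneg (hf₀ y) (hg.nonneg _),
    ⟨_, abs_rconv_le hfi hM⟩,
    rconv_eq_convolution ▸ hfi.integrable_convolution _ hg.integrable, ?_,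
    fun x => (hderiv x).differentiableAt, fun x => ?_⟩
  · rw [rconv_eq_convolution, integral_convolution _ hfi hg.integrable]
    exact mul_le_mul hfc hg.integral_le (integral_nonneg hg.nonneg) hc
  · rw [(hderiv x).deriv]
    calc |_root_.rconv f (deriv g) x| ≤ (∫ y, |f y|) * D := abs_rconv_le hfi hg.abs_deriv_le x
      _ ≤ c * D := by
        rw [hfabs]
        exact mul_le_mul_of_nonneg_right hfc ((abs_nonneg _).trans (hg.abs_deriv_le 0))

theorem hasDerivAt_mul_comp_sub (hf : Differentiable ℝ f) (hg : Differentiable ℝ g) (x y : ℝ) :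
    HasDerivAt (fun y => f y * g (x - y)) (deriv f y * g (x - y) - f y * deriv g (x - y)) y := by
  have hsub : HasDerivAt (fun y => g (x - y)) (-deriv g (x - y)) y := by
    simpa using ((hg (x - y)).hasDerivAt.comp_const_sub x y)
  exact ((hf y).hasDerivAt.mul hsub).congr_deriv (by ring)

theorem integral_abs_deriv_mul_comp_sub_le {ε I D : ℝ} (hfi : Integrable f)
    (hf' : ∀ y, |deriv f y| ≤ ε) (hg : IsControlledDensity g I D) (x : ℝ) :
    ∫ y, |deriv f y * g (x - y) - f y * deriv g (x - y)| ≤ ε * I + (∫ y, |f y|) * D := by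
  have hε : 0 ≤ ε := (abs_nonneg _).trans (hf' 0)
  have hgx : Integrable fun y => g (x - y) := hg.integrable.comp_sub_left x
  calc ∫ y, |deriv f y * g (x - y) - f y * deriv g (x - y)|
      ≤ ∫ y, (ε * g (x - y) + |f y| * D) := by
        refine integral_mono_of_nonneg (ae_of_all _ fun _ => abs_nonneg _)
          ((hgx.const_mul ε).add (hfi.abs.mul_const D)) (ae_of_all _ fun y => ?_)
        refine (abs_sub _ _).trans (add_le_add ?_ ?_) <;> rw [abs_mul]
        · rw [abs_of_nonneg (hg.nonneg _)]
          exact mul_le_mul_of_nonneg_right (hf' y) (hg.nonneg _)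
        · exact mul_le_mul_of_nonneg_left (hg.abs_deriv_le _) (abs_nonneg _)
    _ = ε * (∫ y, g y) + (∫ y, |f y|) * D := by
        rw [integral_add (hgx.const_mul ε) (hfi.abs.mul_const D), integral_const_mul,
          integral_mul_const, integral_sub_left_eq_self]
    _ ≤ ε * I + (∫ y, |f y|) * D := by gcongr; exact hg.integral_le

theorem summable_mul_of_abs_le {ι : Type*} {w u : ι → ℝ} {E : ℝ} (hw₀ : ∀ i, 0 ≤ w i)
    (hw : Summable w) (hu : ∀ i, |u i| ≤ E) : Summable fun i => w i * u i :=
  (hw.mul_right E).of_norm_bounded fun i => by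
    rw [Real.norm_eq_abs, abs_mul, abs_of_nonneg (hw₀ i)]
    exact mul_le_mul_of_nonneg_left (hu i) (hw₀ i)

theorem abs_tsum_mul_le {ι : Type*} {w u : ι → ℝ} {E : ℝ} (hw₀ : ∀ i, 0 ≤ w i) (hw : Summable w)
    (hu : ∀ i, |u i| ≤ E) : |∑' i, w i * u i| ≤ (∑' i, w i) * E := by
  rw [← tsum_mul_right]
  refine tsum_of_norm_bounded (f := fun i => w i * u i) (hw.mul_right E).hasSum fun i => ?_
  rw [Real.norm_eq_abs, abs_mul, abs_of_nonneg (hw₀ i)]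
  exact mul_le_mul_of_nonneg_left (hu i) (hw₀ i)

theorem abs_rconv_sub_zconv_le {c ε I D E : ℝ} {A : ℤ → ℝ} (hf₀ : ∀ x, 0 ≤ f x)
    (hfd : Differentiable ℝ f) (hfi : Integrable f) (hf'i : Integrable (deriv f))
    (hf' : ∀ x, |deriv f x| ≤ ε) (hfc : (∫ x, |f x|) + (∫ x, |deriv f x|) ≤ c)
    (hg : IsControlledDensity g I D) (hA : ∀ n : ℤ, |g n - A n| ≤ E) (n : ℤ) :
    |rconv f g n - zconv (fun p : ℤ => f p) A n| ≤ ε * I + c * D + c * E := by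
  obtain ⟨M, hM⟩ := hg.bounded
  have hd := hasDerivAt_mul_comp_sub hfd hg.differentiable n
  have hi := integrable_mul_comp_sub hfi hg.differentiable.continuous.measurable hM n
  have hi' := (integrable_mul_comp_sub hf'i hg.differentiable.continuous.measurable hM n).sub
    (integrable_mul_comp_sub hfi (measurable_deriv g) hg.abs_deriv_le n)
  have hf_hasDerivAt : ∀ x, HasDerivAt f (deriv f x) x := fun x => (hfd x).hasDerivAt
  have hf'abs : 0 ≤ ∫ x, |deriv f x| := integral_nonneg fun _ => abs_nonneg _
  have hf_sum : ∑' p : ℤ, f p ≤ c := (tsum_comp_intCast_le hf_hasDerivAt hfi hf'i).trans hfc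
  have hsampling : |rconv f g n - ∑' p : ℤ, f p * g (n - p)| ≤ ε * I + c * D := by
    rw [abs_sub_comm]
    refine (abs_tsum_comp_intCast_sub_integral_le hd hi hi').trans
      ((integral_abs_deriv_mul_comp_sub_le hfi hf' hg n).trans ?_)
    gcongr
    · exact (abs_nonneg _).trans (hg.abs_deriv_le 0)
    · linarith
  have hreplace : |∑' p : ℤ, f p * g (n - p) - zconv (fun p : ℤ => f p) A n| ≤ c * E := by
    have herr : ∀ p : ℤ, |g (n - p) - A (n - p)| ≤ E := fun p => by exact_mod_cast hA (n - p)
    have hf_summable := summable_comp_intCast hf_hasDerivAt hfi hf'i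
    have hsplit : zconv (fun p : ℤ => f p) A n
        = ∑' p : ℤ, f p * g (n - p) - ∑' p : ℤ, f p * (g (n - p) - A (n - p)) := by
      rw [← (summable_comp_intCast hd hi hi').tsum_sub
        (summable_mul_of_abs_le (fun p => hf₀ p) hf_summable herr)]
      exact tsum_congr fun p => by ring
    rw [hsplit, sub_sub_cancel]
    exact (abs_tsum_mul_le (w := fun p : ℤ => f p) (fun p => hf₀ p) hf_summable herr).trans
      (mul_le_mul_of_nonneg_right hf_sum ((abs_nonneg _).trans (herr 0)))
  calc _ ≤ |rconv f g n - ∑' p : ℤ, f p * g (n - p)|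
        + |∑' p : ℤ, f p * g (n - p) - zconv (fun p : ℤ => f p) A n| := abs_sub_le _ _ _
    _ ≤ ε * I + c * D + c * E := add_le_add hsampling hreplace

end Convolution

theorem SchwartzMap.integrable_deriv (f : 𝓢(ℝ, ℝ)) : Integrable (deriv f) := by
  have hderiv : ⇑(SchwartzMap.derivCLM ℝ ℝ f) = deriv f :=
    funext (SchwartzMap.derivCLM_apply ℝ f)
  exact hderiv ▸ (SchwartzMap.derivCLM ℝ ℝ f).integrable

theorem SchwartzMap.isControlledDensity {c ε : ℝ} (f : 𝓢(ℝ, ℝ)) (hf₀ : ∀ x, 0 ≤ f x)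
    (hfc : (∫ x, |f x|) + (∫ x, |deriv (fun y => f y) x|) ≤ c)
    (hf' : ∀ x, |deriv (fun y => f y) x| ≤ ε) : IsControlledDensity f c ε where
  nonneg := hf₀
  bounded := ⟨_, fun x => (Real.norm_eq_abs _).symm.trans_le (f.norm_le_seminorm ℝ x)⟩
  integrable := f.integrable
  integral_le := by
    have hderiv_abs : 0 ≤ ∫ x, |deriv (fun y => f y) x| := integral_nonneg fun _ => abs_nonneg _
    have habs : ∫ x, f x ≤ ∫ x, |f x| :=
      integral_mono (f.integrable (μ := volume)) f.integrable.abs fun x => le_abs_self (f x)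
    linarith
  differentiable := f.differentiable
  abs_deriv_le := hf'

section Iterated

variable {c ε : ℝ}

theorem isControlledDensity_iConvR (m : ℕ) (σ : Fin (m + 1) → 𝓢(ℝ, ℝ))
    (hnonneg : ∀ i x, 0 ≤ σ i x)
    (hL1 : ∀ i, (∫ x, |σ i x|) + (∫ x, |deriv (fun y => σ i y) x|) ≤ c)
    (hLinfty : ∀ i x, |deriv (fun y => σ i y) x| ≤ ε) :
    IsControlledDensity (iConvR m fun i => σ i) (c ^ (m + 1)) (ε * c ^ m) := by
  induction m with
  | zero => simpa [iConvR] using (σ 0).isControlledDensity (hnonneg 0) (hL1 0) (hLinfty 0)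
  | succ m ih =>
    have hrest := ih (fun i => σ i.succ) (fun i => hnonneg i.succ) (fun i => hL1 i.succ)
      (fun i => hLinfty i.succ)
    rw [pow_succ', show ε * c ^ (m + 1) = c * (ε * c ^ m) by ring]
    exact hrest.rconv (hnonneg 0) (σ 0).integrable
      ((σ 0).isControlledDensity (hnonneg 0) (hL1 0) (hLinfty 0)).integral_le

theorem abs_iConvR_sub_iConv_le (m : ℕ) (σ : Fin (m + 1) → 𝓢(ℝ, ℝ))
    (hnonneg : ∀ i x, 0 ≤ σ i x)
    (hL1 : ∀ i, (∫ x, |σ i x|) + (∫ x, |deriv (fun y => σ i y) x|) ≤ c)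
    (hLinfty : ∀ i x, |deriv (fun y => σ i y) x| ≤ ε) (k : ℤ) :
    |iConvR m (fun i => σ i) k - iConv m (fun i n => σ i (n : ℝ)) k| ≤ 2 * m * ε * c ^ m := by
  induction m generalizing k with
  | zero => simp [iConvR, iConv]
  | succ m ih =>
    calc _ ≤ ε * c ^ (m + 1) + c * (ε * c ^ m) + c * (2 * m * ε * c ^ m) :=
          abs_rconv_sub_zconv_le (hnonneg 0) (σ 0).differentiable (σ 0).integrable
            (σ 0).integrable_deriv (hLinfty 0) (hL1 0)
            (isControlledDensity_iConvR m _ (fun i => hnonneg i.succ) (fun i => hL1 i.succ)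
              (fun i => hLinfty i.succ))
            (ih _ (fun i => hnonneg i.succ) (fun i => hL1 i.succ) (fun i => hLinfty i.succ)) k
      _ = 2 * ↑(m + 1) * ε * c ^ (m + 1) := by push_cast; ring

end Iterated

-- `81/64 = 3 (3/4)^3 = 4 (3/4)^4` is the maximum; the sequence decreases from `m = 3` on.
theorem nat_mul_three_quarters_pow_le (m : ℕ) : (m : ℝ) * (3 / 4) ^ m ≤ 81 / 64 := by
  induction m with
  | zero => norm_num
  | succ k ih =>
    rcases le_or_gt 3 k with hk | hk
    · have hk' : (3 : ℝ) ≤ k := by exact_mod_cast hk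
      have hq : (0 : ℝ) ≤ (3 / 4) ^ k := by positivity
      rw [pow_succ]
      push_cast
      nlinarith
    · interval_cases k <;> norm_num

theorem compare_real_and_integer_convolutions (ε : ℝ) (hε : 0 < ε)
    (m : ℕ) (σ : Fin (m + 1) → SchwartzMap ℝ ℝ)
    (hnonneg : ∀ i x, 0 ≤ σ i x)
    (hL1 : ∀ i, (∫ x : ℝ, |σ i x|) + (∫ x : ℝ, |deriv (fun y => σ i y) x|) ≤ 3 / 4)
    (hLinfty : ∀ i, ∀ x : ℝ, |deriv (fun y => σ i y) x| ≤ ε) :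
    ∀ k : ℤ,
      |iConvR m (fun i => σ i) k -
          iConv m (fun i n => σ i (n : ℝ)) k| < 3 * ε := by
  intro k
  calc _ ≤ 2 * m * ε * (3 / 4) ^ m := abs_iConvR_sub_iConv_le m σ hnonneg hL1 hLinfty k
    _ = 2 * ((m : ℝ) * (3 / 4) ^ m) * ε := by ring
    _ ≤ 2 * (81 / 64) * ε := by gcongr; exact nat_mul_three_quarters_pow_le m
    _ < 3 * ε := by linarith
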